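/- Let ψ ∈ ℂ^n be a unit vector and let A, B be Hermitian n×n matrices. Then Var(ψ, A) + Var(ψ, B) ≥ 2 √(Var(ψ, A) · Var(ψ, B)) ≥ |⟨ψ, (AB − BA) ψ⟩|. -/

import Mathlib

open Matrix BigOperators

/-- The complex inner product `⟨x, y⟩ = ∑ k, conj (x k) * y k`. -/
noncomputable def dotc {ι : Type*} [Fintype ι] (x y : ι → ℂ) : ℂ :=
  ∑ k, (starRingEnd ℂ) (x k) * y k

/-- Variance of the Hermitian observable `A` in the (unit) state `ψ`:
`Var(ψ, A) = ⟨ψ, A² ψ⟩ − ⟨ψ, A ψ⟩²` (a real number, since both expectations are real). -/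
noncomputable def qVar {ι : Type*} [Fintype ι] (ψ : ι → ℂ) (A : Matrix ι ι ℂ) : ℝ :=
  (dotc ψ ((A * A).mulVec ψ)).re - ((dotc ψ (A.mulVec ψ)).re) ^ 2

section Aux

variable {ι : Type*} [Fintype ι]

lemma dotc_conj (x y : ι → ℂ) : (starRingEnd ℂ) (dotc x y) = dotc y x := by
  unfold dotc
  rw [map_sum]
  exact Finset.sum_congr rfl fun k _ => by simp [mul_comm]

lemma dotc_sub_left (x y z : ι → ℂ) : dotc (x - y) z = dotc x z - dotc y z := by
  unfold dotc
  rw [← Finset.sum_sub_distrib]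
  exact Finset.sum_congr rfl fun k _ => by simp [sub_mul]

lemma dotc_sub_right (x y z : ι → ℂ) : dotc x (y - z) = dotc x y - dotc x z := by
  unfold dotc
  rw [← Finset.sum_sub_distrib]
  exact Finset.sum_congr rfl fun k _ => by simp [mul_sub]

lemma dotc_smul_left (c : ℂ) (x y : ι → ℂ) :
    dotc (c • x) y = (starRingEnd ℂ) c * dotc x y := by
  unfold dotc
  rw [Finset.mul_sum]
  exact Finset.sum_congr rfl fun k _ => by simp [mul_assoc]

lemma dotc_smul_right (c : ℂ) (x y : ι → ℂ) : dotc x (c • y) = c * dotc x y := by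
  unfold dotc
  rw [Finset.mul_sum]
  exact Finset.sum_congr rfl fun k _ => by simp; ring

lemma dotc_herm (A : Matrix ι ι ℂ) (hA : A.IsHermitian) (x y : ι → ℂ) :
    dotc x (A.mulVec y) = dotc (A.mulVec x) y := by
  unfold dotc
  simp only [mulVec, dotProduct, Finset.mul_sum, map_sum, Finset.sum_mul]
  rw [Finset.sum_comm]
  refine Finset.sum_congr rfl fun j _ => Finset.sum_congr rfl fun k _ => ?_
  have h : (starRingEnd ℂ) (A j k) = A k j := by
    have := congrFun (congrFun hA k) j
    simpa [conjTranspose_apply] using this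
  simp [h]
  ring

lemma dotc_eq_inner {n : ℕ} (x y : EuclideanSpace ℂ (Fin n)) :
    dotc x y = @inner ℂ (EuclideanSpace ℂ (Fin n)) _ x y := by
  simp [dotc, PiLp.inner_apply, RCLike.inner_apply, mul_comm]

end Aux

/-- Robertson uncertainty relation together with AM–GM: for a unit vector `ψ` and
Hermitian matrices `A`, `B`,
`Var(ψ,A) + Var(ψ,B) ≥ 2 √(Var(ψ,A)·Var(ψ,B)) ≥ |⟨ψ, (AB − BA) ψ⟩|`. -/
theorem variance_uncertainty {n : ℕ} (ψ : Fin n → ℂ) (A B : Matrix (Fin n) (Fin n) ℂ)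
    (hψ : dotc ψ ψ = 1) (hA : A.IsHermitian) (hB : B.IsHermitian) :
    qVar ψ A + qVar ψ B ≥ 2 * Real.sqrt (qVar ψ A * qVar ψ B) ∧
      2 * Real.sqrt (qVar ψ A * qVar ψ B) ≥
        ‖dotc ψ ((A * B - B * A).mulVec ψ)‖ := by
  classical
  set a : ℝ := (dotc ψ (A.mulVec ψ)).re with ha
  set b : ℝ := (dotc ψ (B.mulVec ψ)).re with hb
  -- expectations are real
  have hAr : dotc ψ (A.mulVec ψ) = (a : ℂ) := by
    have h1 : (starRingEnd ℂ) (dotc ψ (A.mulVec ψ)) = dotc ψ (A.mulVec ψ) := by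
      rw [dotc_conj, dotc_herm A hA]
    exact (Complex.conj_eq_iff_re.mp h1).symm
  have hBr : dotc ψ (B.mulVec ψ) = (b : ℂ) := by
    have h1 : (starRingEnd ℂ) (dotc ψ (B.mulVec ψ)) = dotc ψ (B.mulVec ψ) := by
      rw [dotc_conj, dotc_herm B hB]
    exact (Complex.conj_eq_iff_re.mp h1).symm
  have hAr' : dotc (A.mulVec ψ) ψ = (a : ℂ) := by
    rw [← dotc_herm A hA, hAr]
  have hBr' : dotc (B.mulVec ψ) ψ = (b : ℂ) := by
    rw [← dotc_herm B hB, hBr]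
  -- centered vectors
  set u : EuclideanSpace ℂ (Fin n) := WithLp.toLp 2 (A.mulVec ψ - (a : ℂ) • ψ) with hu
  set v : EuclideanSpace ℂ (Fin n) := WithLp.toLp 2 (B.mulVec ψ - (b : ℂ) • ψ) with hv
  have hca : (starRingEnd ℂ) ((a : ℝ) : ℂ) = (a : ℂ) := Complex.conj_ofReal a
  have hcb : (starRingEnd ℂ) ((b : ℝ) : ℂ) = (b : ℂ) := Complex.conj_ofReal b
  -- variance = squared norm of centered vector
  have hAA : dotc ψ ((A * A).mulVec ψ) = dotc (A.mulVec ψ) (A.mulVec ψ) := by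
    rw [← mulVec_mulVec, dotc_herm A hA]
  have hBB : dotc ψ ((B * B).mulVec ψ) = dotc (B.mulVec ψ) (B.mulVec ψ) := by
    rw [← mulVec_mulVec, dotc_herm B hB]
  have huu : dotc u u = dotc ψ ((A * A).mulVec ψ) - (a : ℂ) ^ 2 := by
    rw [hu]
    rw [show ((WithLp.toLp 2 (A.mulVec ψ - (a : ℂ) • ψ) : EuclideanSpace ℂ (Fin n)) : Fin n → ℂ)
        = (A.mulVec ψ - (a : ℂ) • ψ : Fin n → ℂ) from rfl]
    rw [dotc_sub_left, dotc_sub_right, dotc_sub_right, dotc_smul_left, dotc_smul_right,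
      dotc_smul_left, dotc_smul_right, hψ, hAr, hAr', ← hAA, hca]
    ring
  have hvv : dotc v v = dotc ψ ((B * B).mulVec ψ) - (b : ℂ) ^ 2 := by
    rw [hv]
    rw [show ((WithLp.toLp 2 (B.mulVec ψ - (b : ℂ) • ψ) : EuclideanSpace ℂ (Fin n)) : Fin n → ℂ)
        = (B.mulVec ψ - (b : ℂ) • ψ : Fin n → ℂ) from rfl]
    rw [dotc_sub_left, dotc_sub_right, dotc_sub_right, dotc_smul_left, dotc_smul_right,
      dotc_smul_left, dotc_smul_right, hψ, hBr, hBr', ← hBB, hcb]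
    ring
  have hqA : qVar ψ A = ‖u‖ ^ 2 := by
    have h2 : (dotc u u).re = ‖u‖ ^ 2 := by
      rw [dotc_eq_inner]
      simpa using @inner_self_eq_norm_sq ℂ _ _ _ _ u
    rw [← h2, huu]
    unfold qVar
    rw [Complex.sub_re, ← Complex.ofReal_pow, Complex.ofReal_re]
  have hqB : qVar ψ B = ‖v‖ ^ 2 := by
    have h2 : (dotc v v).re = ‖v‖ ^ 2 := by
      rw [dotc_eq_inner]
      simpa using @inner_self_eq_norm_sq ℂ _ _ _ _ v
    rw [← h2, hvv]
    unfold qVar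
    rw [Complex.sub_re, ← Complex.ofReal_pow, Complex.ofReal_re]
  -- the sqrt of the product
  have hsq : Real.sqrt (qVar ψ A * qVar ψ B) = ‖u‖ * ‖v‖ := by
    rw [hqA, hqB, show ‖u‖ ^ 2 * ‖v‖ ^ 2 = (‖u‖ * ‖v‖) ^ 2 by ring,
      Real.sqrt_sq (by positivity)]
  -- commutator expectation
  have hcomm : dotc ψ ((A * B - B * A).mulVec ψ) = dotc u v - dotc v u := by
    have huv : dotc u v = dotc (A.mulVec ψ) (B.mulVec ψ)
        - (b : ℂ) * a - (a : ℂ) * b + (a : ℂ) * b := by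
      rw [hu, hv]
      rw [show ((WithLp.toLp 2 (A.mulVec ψ - (a : ℂ) • ψ) : EuclideanSpace ℂ (Fin n)) : Fin n → ℂ)
          = (A.mulVec ψ - (a : ℂ) • ψ : Fin n → ℂ) from rfl,
        show ((WithLp.toLp 2 (B.mulVec ψ - (b : ℂ) • ψ) : EuclideanSpace ℂ (Fin n)) : Fin n → ℂ)
          = (B.mulVec ψ - (b : ℂ) • ψ : Fin n → ℂ) from rfl]
      rw [dotc_sub_left, dotc_sub_right, dotc_sub_right, dotc_smul_left, dotc_smul_right,
        dotc_smul_left, dotc_smul_right, hψ, hBr, hAr', hca]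
      ring
    have hvu : dotc v u = dotc (B.mulVec ψ) (A.mulVec ψ)
        - (a : ℂ) * b - (b : ℂ) * a + (b : ℂ) * a := by
      rw [hu, hv]
      rw [show ((WithLp.toLp 2 (A.mulVec ψ - (a : ℂ) • ψ) : EuclideanSpace ℂ (Fin n)) : Fin n → ℂ)
          = (A.mulVec ψ - (a : ℂ) • ψ : Fin n → ℂ) from rfl,
        show ((WithLp.toLp 2 (B.mulVec ψ - (b : ℂ) • ψ) : EuclideanSpace ℂ (Fin n)) : Fin n → ℂ)
          = (B.mulVec ψ - (b : ℂ) • ψ : Fin n → ℂ) from rfl]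
      rw [dotc_sub_left, dotc_sub_right, dotc_sub_right, dotc_smul_left, dotc_smul_right,
        dotc_smul_left, dotc_smul_right, hψ, hAr, hBr', hcb]
      ring
    have h1 : dotc ψ ((A * B).mulVec ψ) = dotc (A.mulVec ψ) (B.mulVec ψ) := by
      rw [← mulVec_mulVec, dotc_herm A hA]
    have h2 : dotc ψ ((B * A).mulVec ψ) = dotc (B.mulVec ψ) (A.mulVec ψ) := by
      rw [← mulVec_mulVec, dotc_herm B hB]
    have hLHS : dotc ψ ((A * B - B * A).mulVec ψ)
        = dotc (A.mulVec ψ) (B.mulVec ψ) - dotc (B.mulVec ψ) (A.mulVec ψ) := by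
      rw [sub_mulVec, dotc_sub_right, h1, h2]
    rw [hLHS, huv, hvu]
    ring
  -- bound the commutator
  have hCS : ‖dotc u v‖ ≤ ‖u‖ * ‖v‖ := by
    rw [dotc_eq_inner]
    exact norm_inner_le_norm u v
  have hbound : ‖dotc ψ ((A * B - B * A).mulVec ψ)‖ ≤ 2 * (‖u‖ * ‖v‖) := by
    rw [hcomm]
    calc ‖dotc u v - dotc v u‖
        ≤ ‖dotc u v‖ + ‖dotc v u‖ := by
          exact norm_sub_le _ _
      _ = ‖dotc u v‖ + ‖dotc u v‖ := by
          rw [← dotc_conj u v, Complex.norm_conj]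
      _ ≤ 2 * (‖u‖ * ‖v‖) := by linarith
  constructor
  · rw [hsq, hqA, hqB]
    nlinarith [sq_nonneg (‖u‖ - ‖v‖)]
  · rw [hsq]
    exact hbound
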